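/- Let g be an invertible symmetric linear operator on ℝ^n and let g_∧ denote its exterior-power extension to Λℝ^n. Then for any pseudoscalar I ∈ Λ^n ℝ^n and Y ∈ Λℝ^n, the g⁻¹-Clifford product satisfies I ∘_{g⁻¹} Y = (det g)⁻¹ g_∧(I Y), where ∘_{g⁻¹} is the Clifford product associated to the metric g⁻¹ and I Y the Euclidean Clifford product. -/

import Mathlib

/- STATEMENT 10: For an invertible symmetric operator g on ℝⁿ, any pseudoscalar
I ∈ Λⁿℝⁿ and any multivector Y, the g⁻¹-Clifford product satisfies
I ∘_{g⁻¹} Y = (det g)⁻¹ g_∧(I Y), where I Y is the Euclidean Clifford product and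
g_∧ the exterior-power extension of g. -/

noncomputable section
open CliffordAlgebra

/-- the Euclidean quadratic form `v ↦ ⟪v,v⟫` on `ℝⁿ`. -/
def euclQ (n : ℕ) : QuadraticForm ℝ (EuclideanSpace ℝ (Fin n)) :=
  LinearMap.BilinMap.toQuadraticMap (innerₗ _ : LinearMap.BilinForm ℝ (EuclideanSpace ℝ (Fin n)))

abbrev Mv (n : ℕ) := CliffordAlgebra (euclQ n)

/-- the standard orthonormal basis vectors of `ℝⁿ`. -/
def bv (n : ℕ) (i : Fin n) : EuclideanSpace ℝ (Fin n) := EuclideanSpace.single i 1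

/-- the constant unit pseudoscalar `τ = b_1 b_2 ⋯ b_n`. -/
def tau (n : ℕ) : Mv n := (List.ofFn fun i => ι (euclQ n) (bv n i)).prod

/-- exterior product of a vector with a multivector inside the Clifford algebra. -/
def vWedge {n : ℕ} (a : EuclideanSpace ℝ (Fin n)) (x : Mv n) : Mv n :=
  (2⁻¹ : ℝ) • (ι (euclQ n) a * x + involute x * ι (euclQ n) a)

/-- left contraction of a multivector by a vector inside the Clifford algebra. -/
def vLCont {n : ℕ} (a : EuclideanSpace ℝ (Fin n)) (x : Mv n) : Mv n :=
  (2⁻¹ : ℝ) • (ι (euclQ n) a * x - involute x * ι (euclQ n) a)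

/-- the exterior-power extension (outermorphism) `f_∧` of a linear map `f`, acting on
multivectors. -/
def gext {n : ℕ} (f : EuclideanSpace ℝ (Fin n) →ₗ[ℝ] EuclideanSpace ℝ (Fin n)) :
    Mv n →ₗ[ℝ] Mv n :=
  (equivExterior (euclQ n)).symm.toLinearMap ∘ₗ
    (ExteriorAlgebra.map f).toLinearMap ∘ₗ (equivExterior (euclQ n)).toLinearMap

/-- the determinant of (the linear map underlying) a continuous linear operator. -/
def cdet {n : ℕ} (f : EuclideanSpace ℝ (Fin n) →L[ℝ] EuclideanSpace ℝ (Fin n)) : ℝ :=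
  LinearMap.det (f : EuclideanSpace ℝ (Fin n) →ₗ[ℝ] EuclideanSpace ℝ (Fin n))

/-- the quadratic form `v ↦ ⟪v, f v⟫` associated to an operator `f`. -/
def opQ {n : ℕ} (f : EuclideanSpace ℝ (Fin n) →L[ℝ] EuclideanSpace ℝ (Fin n)) :
    QuadraticForm ℝ (EuclideanSpace ℝ (Fin n)) :=
  LinearMap.BilinMap.toQuadraticMap
    (LinearMap.mk₂ ℝ (fun u v => (inner ℝ u (f v) : ℝ))
      (fun u u' v => inner_add_left _ _ _)
      (fun c u v => by beta_reduce; rw [smul_eq_mul, real_inner_smul_left])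
      (fun u v v' => by beta_reduce; rw [map_add, inner_add_right])
      (fun c u v => by beta_reduce; rw [map_smul, smul_eq_mul, real_inner_smul_right]))

/-- the Clifford product associated to the quadratic form `Q'`, transported to the
Euclidean Clifford algebra (so all products live on the same underlying space of
multivectors). -/
def cmulQ {n : ℕ} (Q' : QuadraticForm ℝ (EuclideanSpace ℝ (Fin n))) (x y : Mv n) : Mv n :=
  (equivExterior (euclQ n)).symm ((equivExterior Q')
    ((equivExterior Q').symm (equivExterior (euclQ n) x) *
     (equivExterior Q').symm (equivExterior (euclQ n) y)))

/-- the metric Hodge operator `⋆_g X = √|det g| g⁻¹_∧(X̃) τ` (pointwise data). -/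
def starG {n : ℕ} (g ginv : EuclideanSpace ℝ (Fin n) →L[ℝ] EuclideanSpace ℝ (Fin n))
    (X : Mv n) : Mv n :=
  Real.sqrt |cdet g| • (gext (ginv : _ →ₗ[ℝ] _) (reverse X) * tau n)

/-- the inverse metric Hodge operator `⋆_g⁻¹ X = (-1)^q √|det g| τ g⁻¹_∧(X̃)`. -/
def starGinv {n : ℕ} (q : ℕ) (g ginv : EuclideanSpace ℝ (Fin n) →L[ℝ] EuclideanSpace ℝ (Fin n))
    (X : Mv n) : Mv n :=
  ((-1 : ℝ) ^ q * Real.sqrt |cdet g|) • (tau n * gext (ginv : _ →ₗ[ℝ] _) (reverse X))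

/-- `X' x` is the derivative of the multivector field `X` at each `x ∈ U`, weakly. -/
def IsDerivOn {n : ℕ} (U : Set (EuclideanSpace ℝ (Fin n))) (X : EuclideanSpace ℝ (Fin n) → Mv n)
    (X' : EuclideanSpace ℝ (Fin n) → EuclideanSpace ℝ (Fin n) →ₗ[ℝ] Mv n) : Prop :=
  ∀ ℓ : Mv n →ₗ[ℝ] ℝ, ∀ x ∈ U,
    HasFDerivAt (fun y => ℓ (X y)) (LinearMap.toContinuousLinearMap (ℓ ∘ₗ X' x)) x

/-!
Transport every Clifford product to the exterior algebra along `equivExterior`, and let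
`ω` be the top blade `e₁ ∧ ⋯ ∧ eₙ`. For any quadratic form `Q` with associated bilinear
form `B_Q`, the Leibniz rule for contractions together with `v ∧ ω = 0` shows that
`Q`-multiplying by `ω` turns wedging with a vector `v` into contracting with `B_Q(v, ·)`, up
to the sign `(-1)^(n+1)`. So `ω ∘_Q x` is computed from `B_Q` alone, by induction on `x`.
Since `B_{g⁻¹}(v, g w) = ⟪v, w⟫`, contracting with `B_{g⁻¹}(v, ·)` after `g_∧` is `g_∧`
after the Euclidean contraction with `v`, and `g_∧ ω = det g • ω` produces the factor
`(det g)⁻¹`.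
-/

local infixl:70 " ⌋ " => contractLeft

namespace CliffordAlgebra

variable {R M : Type*} [CommRing R] [AddCommGroup M] [Module R M]
  {Q Q' : QuadraticForm R M} {B : LinearMap.BilinForm R M}

theorem involute_contractLeft (d : Module.Dual R M) (x : CliffordAlgebra Q) :
    involute (d ⌋ x) = -(d ⌋ involute x) := by
  induction x using CliffordAlgebra.left_induction with
  | algebraMap r => simp
  | add a b ha hb => rw [map_add, map_add, ha, hb, map_add, map_add, neg_add]
  | ι_mul a m ha =>
    simp only [contractLeft_ι_mul, map_sub, map_smul, map_mul, involute_ι, ha, neg_mul, mul_neg,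
      map_neg, neg_neg, neg_sub]

theorem contractLeft_mul (d : Module.Dual R M) (x y : CliffordAlgebra Q) :
    d ⌋ (x * y) = d ⌋ x * y + involute x * (d ⌋ y) := by
  induction x using CliffordAlgebra.left_induction with
  | algebraMap r =>
    rw [contractLeft_algebraMap_mul, contractLeft_algebraMap, zero_mul, zero_add,
      involute.commutes]
  | add a b ha hb =>
    rw [add_mul, map_add, ha, hb, map_add, map_add, add_mul, add_mul]
    abel
  | ι_mul a m ha =>
    rw [mul_assoc, contractLeft_ι_mul, ha, contractLeft_ι_mul, map_mul, involute_ι,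
      sub_mul, smul_mul_assoc, mul_add, neg_mul, neg_mul, mul_assoc, mul_assoc]
    abel

theorem ι_mul_sub_involute_mul_ι (v : M) (x : CliffordAlgebra Q) :
    ι Q v * x - involute x * ι Q v = Q.polarBilin v ⌋ x := by
  induction x using CliffordAlgebra.left_induction with
  | algebraMap r =>
    rw [involute.commutes, ← Algebra.commutes, sub_self, contractLeft_algebraMap]
  | add a b ha hb =>
    rw [map_add, mul_add, add_mul, map_add, ← ha, ← hb]
    abel
  | ι_mul a m ha =>
    rw [contractLeft_ι_mul, ← ha, QuadraticMap.polarBilin_apply_apply, map_mul, involute_ι,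
      ← mul_assoc, ι_mul_ι_comm, Algebra.smul_def]
    simp only [neg_mul, mul_sub, sub_mul, mul_assoc]
    abel

theorem changeForm_involute (h : B.toQuadraticMap = Q' - Q) (x : CliffordAlgebra Q) :
    changeForm h (involute x) = involute (changeForm h x) := by
  induction x using CliffordAlgebra.left_induction with
  | algebraMap r => simp
  | add a b ha hb => rw [map_add, map_add, ha, hb, map_add, map_add]
  | ι_mul a m ha =>
    rw [map_mul, involute_ι, neg_mul, map_neg, changeForm_ι_mul, changeForm_ι_mul, ha,
      map_sub, map_mul, involute_ι, involute_contractLeft, neg_mul, sub_neg_eq_add, neg_sub,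
      neg_add_eq_sub]

theorem contractLeft_prod_map_ι_eq_zero (d : Module.Dual R M) (l : List M)
    (hl : ∀ a ∈ l, d a = 0) : d ⌋ (l.map (ι Q)).prod = 0 := by
  induction l with
  | nil => simp
  | cons a t ih =>
    rw [List.map_cons, List.prod_cons, contractLeft_ι_mul, hl a List.mem_cons_self,
      ih fun b hb => hl b (List.mem_cons_of_mem a hb), zero_smul, mul_zero, sub_zero]

theorem changeForm_prod_map_ι (h : B.toQuadraticMap = Q' - Q) (l : List M)
    (hl : l.Pairwise fun a b => B a b = 0) :
    changeForm h (l.map (ι Q)).prod = (l.map (ι Q')).prod := by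
  induction l with
  | nil => simp
  | cons a t ih =>
    rw [List.pairwise_cons] at hl
    rw [List.map_cons, List.prod_cons, changeForm_ι_mul, ih hl.2,
      contractLeft_prod_map_ι_eq_zero _ _ hl.1, sub_zero, List.map_cons, List.prod_cons]

section equivExterior

variable [Invertible (2 : R)]

theorem equivExterior_ι_mul (v : M) (x : CliffordAlgebra Q) :
    equivExterior Q (ι Q v * x) =
      ExteriorAlgebra.ι R v * equivExterior Q x +
        QuadraticMap.associated Q v ⌋ equivExterior Q x := by
  simp only [equivExterior, changeFormEquiv_apply, changeForm_ι_mul, map_neg, LinearMap.neg_apply,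
    sub_neg_eq_add]

theorem equivExterior_symm_ι_mul (v : M) (x : ExteriorAlgebra R M) :
    (equivExterior Q).symm (ExteriorAlgebra.ι R v * x) =
      ι Q v * (equivExterior Q).symm x -
        QuadraticMap.associated Q v ⌋ (equivExterior Q).symm x := by
  simp only [equivExterior, changeFormEquiv_symm, changeFormEquiv_apply, changeForm_ι_mul,
    map_neg, LinearMap.neg_apply, neg_neg]

theorem equivExterior_contractLeft (d : Module.Dual R M) (x : CliffordAlgebra Q) :
    equivExterior Q (d ⌋ x) = d ⌋ equivExterior Q x :=
  changeForm_contractLeft changeForm.associated_neg_proof d x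

theorem equivExterior_symm_involute (x : ExteriorAlgebra R M) :
    (equivExterior Q).symm (involute x) = involute ((equivExterior Q).symm x) :=
  changeForm_involute (changeForm.neg_proof changeForm.associated_neg_proof) x

variable {Ω : CliffordAlgebra Q}

theorem associated_contractLeft_eq_ι_mul
    (hΩ : ∀ w, ExteriorAlgebra.ι R w * equivExterior Q Ω = 0) (v : M) :
    QuadraticMap.associated Q v ⌋ Ω = ι Q v * Ω :=
  (equivExterior Q).injective <| by
    rw [equivExterior_contractLeft, equivExterior_ι_mul, hΩ, zero_add]

theorem involute_mul_ι_eq_neg (hΩ : ∀ w, ExteriorAlgebra.ι R w * equivExterior Q Ω = 0)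
    (v : M) : involute Ω * ι Q v = -(ι Q v * Ω) := by
  have h := ι_mul_sub_involute_mul_ι v Ω
  rw [← QuadraticMap.two_nsmul_associated R, LinearMap.smul_apply, map_nsmul,
    LinearMap.smul_apply, associated_contractLeft_eq_ι_mul hΩ, two_smul] at h
  calc involute Ω * ι Q v = ι Q v * Ω - (ι Q v * Ω - involute Ω * ι Q v) := by abel
    _ = -(ι Q v * Ω) := by rw [h]; abel

theorem involute_mul_equivExterior_symm_ι_mul
    (hΩ : ∀ w, ExteriorAlgebra.ι R w * equivExterior Q Ω = 0) (v : M) (x : ExteriorAlgebra R M) :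
    involute Ω * (equivExterior Q).symm (ExteriorAlgebra.ι R v * x) =
      -(QuadraticMap.associated Q v ⌋ (Ω * (equivExterior Q).symm x)) := by
  rw [equivExterior_symm_ι_mul, contractLeft_mul, associated_contractLeft_eq_ι_mul hΩ, mul_sub,
    ← mul_assoc, involute_mul_ι_eq_neg hΩ, neg_mul, mul_assoc]
  abel

end equivExterior

end CliffordAlgebra

namespace ExteriorAlgebra

open Module

section CommRing

variable {R M : Type*} [CommRing R] [AddCommGroup M] [Module R M]

theorem involute_ιMulti {n : ℕ} (v : Fin n → M) :
    involute (ιMulti R n v) = (-1 : R) ^ n • ιMulti R n v := by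
  have hprod : (List.ofFn fun i => ι R (v i)) = (List.ofFn v).map (ι R) := by
    rw [List.map_ofFn]
    rfl
  rw [ιMulti_apply, hprod, involute_prod_map_ι, List.length_ofFn]

theorem map_contractLeft_comp {N : Type*} [AddCommGroup N] [Module R N] (f : M →ₗ[R] N)
    (d : Dual R N) (x : ExteriorAlgebra R M) : map f ((d ∘ₗ f) ⌋ x) = d ⌋ map f x := by
  induction x using CliffordAlgebra.left_induction with
  | algebraMap r => simp
  | add a b ha hb => rw [map_add, map_add, ha, hb, map_add, map_add]
  | ι_mul a m ha =>
    change map f ((d ∘ₗ f) ⌋ (ι R m * a)) = d ⌋ map f (ι R m * a)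
    rw [contractLeft_ι_mul, map_sub, map_smul, map_mul, map_mul, map_apply_ι, ha,
      contractLeft_ι_mul, LinearMap.comp_apply]

variable [Invertible (2 : R)]

def cliffordMul (Q : QuadraticForm R M) (x y : ExteriorAlgebra R M) : ExteriorAlgebra R M :=
  equivExterior Q ((equivExterior Q).symm x * (equivExterior Q).symm y)

theorem cliffordMul_equivExterior (Q : QuadraticForm R M) (x y : CliffordAlgebra Q) :
    cliffordMul Q (equivExterior Q x) (equivExterior Q y) = equivExterior Q (x * y) := by
  simp only [cliffordMul, LinearEquiv.symm_apply_apply]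

theorem cliffordMul_add (Q : QuadraticForm R M) (x y z : ExteriorAlgebra R M) :
    cliffordMul Q x (y + z) = cliffordMul Q x y + cliffordMul Q x z := by
  simp only [cliffordMul, map_add, mul_add]

theorem cliffordMul_algebraMap (Q : QuadraticForm R M) (x : ExteriorAlgebra R M) (r : R) :
    cliffordMul Q x (algebraMap R _ r) = r • x := by
  have h : (equivExterior Q).symm (algebraMap R _ r) = algebraMap R _ r :=
    changeForm_algebraMap (changeForm.neg_proof changeForm.associated_neg_proof) r
  rw [cliffordMul, h, ← Algebra.commutes, ← Algebra.smul_def, map_smul,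
    LinearEquiv.apply_symm_apply]

theorem cliffordMul_ιMulti_ι_mul (Q : QuadraticForm R M) {n : ℕ} {b : Fin n → M}
    (hb : ∀ w, ι R w * ιMulti R n b = 0) (v : M) (x : ExteriorAlgebra R M) :
    cliffordMul Q (ιMulti R n b) (ι R v * x) =
      (-1 : R) ^ (n + 1) • (QuadraticMap.associated Q v ⌋ cliffordMul Q (ιMulti R n b) x) := by
  set Ω := (equivExterior Q).symm (ιMulti R n b)
  have hΩ : ∀ w, ι R w * equivExterior Q Ω = 0 := by
    simpa only [Ω, LinearEquiv.apply_symm_apply] using hb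
  have hinv : involute Ω = (-1 : R) ^ n • Ω := by
    rw [← equivExterior_symm_involute, involute_ιMulti, map_smul]
  have key := involute_mul_equivExterior_symm_ι_mul hΩ v x
  rw [hinv, smul_mul_assoc] at key
  have hΩx : Ω * (equivExterior Q).symm (ι R v * x) =
      (-1 : R) ^ (n + 1) • (QuadraticMap.associated Q v ⌋ (Ω * (equivExterior Q).symm x)) :=
    calc Ω * (equivExterior Q).symm (ι R v * x)
        = ((-1 : R) ^ n * (-1) ^ n) • (Ω * (equivExterior Q).symm (ι R v * x)) := by
          rw [← pow_add, Even.neg_one_pow ⟨n, rfl⟩, one_smul]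
      _ = (-1 : R) ^ (n + 1) •
            (QuadraticMap.associated Q v ⌋ (Ω * (equivExterior Q).symm x)) := by
          rw [mul_smul, key, pow_succ, mul_neg_one, neg_smul, smul_neg]
  rw [cliffordMul, cliffordMul, hΩx, map_smul, equivExterior_contractLeft]

end CommRing

section Field

variable {K V : Type*} [Field K] [AddCommGroup V] [Module K V]

theorem ι_mul_ιMulti_eq_zero [FiniteDimensional K V] {n : ℕ} (hn : finrank K V ≤ n)
    (v : Fin n → V) (w : V) : ι K w * ιMulti K n v = 0 := by
  have hdep : ¬LinearIndependent K (Fin.cons w v : Fin (n + 1) → V) := fun h => by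
    have := h.fintype_card_le_finrank
    rw [Fintype.card_fin] at this
    omega
  simpa [Matrix.vecTail, Function.comp_def] using
    (ιMulti K (n + 1)).map_linearDependent _ hdep

theorem _root_.AlternatingMap.apply_eq_basis_det_smul {W : Type*} [AddCommGroup W] [Module K W]
    {n : ℕ} (b : Basis (Fin n) K V) (F : V [⋀^Fin n]→ₗ[K] W) (v : Fin n → V) :
    F v = b.det v • F b := by
  rw [← sub_eq_zero, ← Module.forall_dual_apply_eq_zero_iff K]
  intro φ
  have hφ := DFunLike.congr_fun ((φ.compAlternatingMap F).eq_smul_basis_det b) v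
  simp only [LinearMap.compAlternatingMap_apply, AlternatingMap.smul_apply, smul_eq_mul] at hφ
  rw [map_sub, map_smul, hφ, smul_eq_mul, mul_comm, sub_self]

theorem map_ιMulti_basis {n : ℕ} (b : Basis (Fin n) K V) (f : V →ₗ[K] V) :
    map f (ιMulti K n b) = LinearMap.det f • ιMulti K n b := by
  rw [map_apply_ιMulti, (ιMulti K n).apply_eq_basis_det_smul b, Basis.det_comp, Basis.det_self,
    mul_one]

theorem det_smul_cliffordMul_ιMulti [Invertible (2 : K)] {n : ℕ} (b : Basis (Fin n) K V)
    (Q₁ Q₂ : QuadraticForm K V) (f : V →ₗ[K] V)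
    (hf : ∀ v, QuadraticMap.associated Q₂ v ∘ₗ f = QuadraticMap.associated Q₁ v)
    (x : ExteriorAlgebra K V) :
    LinearMap.det f • cliffordMul Q₂ (ιMulti K n b) x =
      map f (cliffordMul Q₁ (ιMulti K n b) x) := by
  have : FiniteDimensional K V := Module.Finite.of_basis b
  have hb : ∀ w, ι K w * ιMulti K n b = 0 :=
    ι_mul_ιMulti_eq_zero (by rw [finrank_eq_card_basis b, Fintype.card_fin]) b
  induction x using CliffordAlgebra.left_induction with
  | algebraMap r =>
    rw [cliffordMul_algebraMap, cliffordMul_algebraMap, map_smul, map_ιMulti_basis, smul_comm]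
  | add x y hx hy => rw [cliffordMul_add, cliffordMul_add, smul_add, hx, hy, map_add]
  | ι_mul x v hx =>
    rw [cliffordMul_ιMulti_ι_mul Q₂ hb, cliffordMul_ιMulti_ι_mul Q₁ hb, smul_comm, ← map_smul,
      hx, ← map_contractLeft_comp, hf, map_smul]

end Field

end ExteriorAlgebra

section Euclidean

variable {n : ℕ}

theorem associated_euclQ_apply (u v : EuclideanSpace ℝ (Fin n)) :
    QuadraticMap.associated (euclQ n) u v = inner ℝ u v := by
  rw [euclQ, QuadraticMap.associated_left_inverse _ fun x y => real_inner_comm y x]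
  rfl

theorem associated_opQ_apply (f : EuclideanSpace ℝ (Fin n) →L[ℝ] EuclideanSpace ℝ (Fin n))
    (hf : (f : EuclideanSpace ℝ (Fin n) →ₗ[ℝ] EuclideanSpace ℝ (Fin n)).IsSymmetric)
    (u v : EuclideanSpace ℝ (Fin n)) :
    QuadraticMap.associated (opQ f) u v = inner ℝ u (f v) := by
  rw [opQ, QuadraticMap.associated_left_inverse _ fun x y => by
    simp only [LinearMap.mk₂_apply]; rw [← hf.apply_clm, real_inner_comm]]
  rfl

theorem coe_basisFun_toBasis : ⇑(EuclideanSpace.basisFun (Fin n) ℝ).toBasis = bv n := by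
  ext i
  simp [bv]

theorem equivExterior_tau :
    equivExterior (euclQ n) (tau n) = ExteriorAlgebra.ιMulti ℝ n (bv n) := by
  have horth : (List.ofFn (bv n)).Pairwise fun a b =>
      QuadraticMap.associated (-euclQ n) a b = 0 := by
    refine List.pairwise_ofFn.mpr fun i j hij => ?_
    rw [map_neg, LinearMap.neg_apply, LinearMap.neg_apply, associated_euclQ_apply]
    exact neg_eq_zero.mpr (EuclideanSpace.orthonormal_single.2 hij.ne)
  have h := changeForm_prod_map_ι changeForm.associated_neg_proof _ horth
  simp only [List.map_ofFn, Function.comp_def] at h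
  rw [tau, ExteriorAlgebra.ιMulti_apply]
  exact h

theorem cdet_ne_zero_of_comp_eq_id
    {f f' : EuclideanSpace ℝ (Fin n) →L[ℝ] EuclideanSpace ℝ (Fin n)}
    (h : f.comp f' = ContinuousLinearMap.id ℝ _) : cdet f ≠ 0 := by
  have hdet := congrArg (fun h : EuclideanSpace ℝ (Fin n) →L[ℝ] EuclideanSpace ℝ (Fin n) =>
    LinearMap.det (h : EuclideanSpace ℝ (Fin n) →ₗ[ℝ] EuclideanSpace ℝ (Fin n))) h
  rw [ContinuousLinearMap.toLinearMap_comp, LinearMap.det_comp, ContinuousLinearMap.coe_id,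
    LinearMap.det_id] at hdet
  exact left_ne_zero_of_mul_eq_one hdet

theorem isSymmetric_of_comp_eq_id
    {f f' : EuclideanSpace ℝ (Fin n) →L[ℝ] EuclideanSpace ℝ (Fin n)}
    (hf : (f : EuclideanSpace ℝ (Fin n) →ₗ[ℝ] EuclideanSpace ℝ (Fin n)).IsSymmetric)
    (h : f.comp f' = ContinuousLinearMap.id ℝ _) :
    (f' : EuclideanSpace ℝ (Fin n) →ₗ[ℝ] EuclideanSpace ℝ (Fin n)).IsSymmetric := fun u v => by
  have hff' (w) : f (f' w) = w := DFunLike.congr_fun h w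
  simpa [hff'] using (hf (f' u) (f' v)).symm

theorem associated_opQ_comp {f f' : EuclideanSpace ℝ (Fin n) →L[ℝ] EuclideanSpace ℝ (Fin n)}
    (hf' : (f' : EuclideanSpace ℝ (Fin n) →ₗ[ℝ] EuclideanSpace ℝ (Fin n)).IsSymmetric)
    (h : f'.comp f = ContinuousLinearMap.id ℝ _) (v : EuclideanSpace ℝ (Fin n)) :
    QuadraticMap.associated (opQ f') v ∘ₗ (f : EuclideanSpace ℝ (Fin n) →ₗ[ℝ] _) =
      QuadraticMap.associated (euclQ n) v := LinearMap.ext fun w => by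
  have hw : f' (f w) = w := DFunLike.congr_fun h w
  simp [associated_opQ_apply f' hf', associated_euclQ_apply, hw]

end Euclidean

theorem pseudoscalar_gInv_product {n : ℕ}
    (g ginv : EuclideanSpace ℝ (Fin n) →L[ℝ] EuclideanSpace ℝ (Fin n))
    (hsym : ∀ u v, (inner ℝ (g u) v : ℝ) = inner ℝ u (g v))
    (hinv : g.comp ginv = ContinuousLinearMap.id ℝ _ ∧
            ginv.comp g = ContinuousLinearMap.id ℝ _)
    (I : Mv n) (hI : ∃ c : ℝ, I = c • tau n) (Y : Mv n) :
    cmulQ (opQ ginv) I Y = (cdet g)⁻¹ • gext (g : _ →ₗ[ℝ] _) (I * Y) := by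
  obtain ⟨c, rfl⟩ := hI
  have key := ExteriorAlgebra.det_smul_cliffordMul_ιMulti
    (EuclideanSpace.basisFun (Fin n) ℝ).toBasis (euclQ n) (opQ ginv) g
    (associated_opQ_comp (isSymmetric_of_comp_eq_id hsym hinv.1) hinv.2)
    (equivExterior (euclQ n) Y)
  rw [coe_basisFun_toBasis, ← equivExterior_tau, ExteriorAlgebra.cliffordMul_equivExterior,
    ← cdet, ← eq_inv_smul_iff₀ (cdet_ne_zero_of_comp_eq_id hinv.1)] at key
  calc cmulQ (opQ ginv) (c • tau n) Y
      = c • (equivExterior (euclQ n)).symm (ExteriorAlgebra.cliffordMul (opQ ginv)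
          (equivExterior (euclQ n) (tau n)) (equivExterior (euclQ n) Y)) := by
        simp only [cmulQ, ExteriorAlgebra.cliffordMul, map_smul, smul_mul_assoc]
    _ = (cdet g)⁻¹ • gext (g : _ →ₗ[ℝ] _) (c • tau n * Y) := by
        rw [key]
        simp only [gext, LinearMap.comp_apply, LinearEquiv.coe_coe, AlgHom.toLinearMap_apply,
          smul_mul_assoc, map_smul, smul_comm c]
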